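/- Let n ≥ 2, 2 ≤ k ≤ n, ε > 0, and let B̃ be the diagonal n×n matrix B̃ = diag(0, …, 0, (kε)^{1/(k−1)}, …, (kε)^{1/(k−1)}, 1/(kε)) with n−k zeros, k−1 entries (kε)^{1/(k−1)} and one entry 1/(kε). Then B̃ ∈ Γ_k, σ_k(B̃) = 1, and the matrix of derivatives { ∂(σ_k^{1/k})/∂T_{ij} } evaluated at B̃ equals the diagonal matrix M̃ = diag(ε + (k−1)g̃(ε), …, ε + (k−1)g̃(ε), g̃(ε), …, g̃(ε), ε) with n−k entries ε + (k−1)g̃(ε), k−1 entries g̃(ε), and one entry ε, where g̃(ε) := (kε)^{−1/(k−1)}/k; in particular M̃ ∈ 𝓜_k, and for k ≥ 3 and every fixed s ∈ (0,1) the quantity (k−2) g̃(ε)^s + ε^s tends to +∞ as ε → 0. -/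

import Mathlib

open MeasureTheory Matrix Filter Metric Set
open scoped RealInnerProductSpace Classical

noncomputable section

abbrev E (n : ℕ) := EuclideanSpace ℝ (Fin n)

/-- second difference δ(u,x,y) = u(x+y) + u(x−y) − 2u(x) -/
def ddelta {n : ℕ} (u : E n → ℝ) (x y : E n) : ℝ := u (x + y) + u (x - y) - 2 * u x

/-- apply a matrix to a Euclidean vector -/
def mApp {n : ℕ} (M : Matrix (Fin n) (Fin n) ℝ) (y : E n) : E n :=
  (WithLp.equiv 2 (Fin n → ℝ)).symm (M.mulVec ((WithLp.equiv 2 (Fin n → ℝ)) y))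

/-- the positive definite square root of a positive definite matrix (junk value `1` otherwise) -/
def msqrt {n : ℕ} (M : Matrix (Fin n) (Fin n) ℝ) : Matrix (Fin n) (Fin n) ℝ :=
  if h : M.PosDef then
    (h.isHermitian.eigenvectorUnitary : Matrix (Fin n) (Fin n) ℝ) *
      Matrix.diagonal ((↑) ∘ (Real.sqrt ∘ h.isHermitian.eigenvalues)) *
      (star (h.isHermitian.eigenvectorUnitary : Matrix (Fin n) (Fin n) ℝ))
  else 1

/-- largest eigenvalue of a symmetric matrix -/
def lamMax {n : ℕ} (M : Matrix (Fin n) (Fin n) ℝ) : ℝ :=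
  if h : M.IsHermitian then ⨆ i, h.eigenvalues i else 0

/-- smallest eigenvalue of a symmetric matrix -/
def lamMin {n : ℕ} (M : Matrix (Fin n) (Fin n) ℝ) : ℝ :=
  if h : M.IsHermitian then ⨅ i, h.eigenvalues i else 0

/-- the eigenvalue vector λ(A) of a symmetric matrix (junk value `0` otherwise) -/
def eigenv {n : ℕ} (A : Matrix (Fin n) (Fin n) ℝ) : Fin n → ℝ :=
  if h : A.IsHermitian then h.eigenvalues else 0

/-- ω_n : volume of the unit ball in ℝ^n -/
def omegaN (n : ℕ) : ℝ := (volume (ball (0 : E n) 1)).toReal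

/-- u is Lipschitz with constant L -/
def LipWith {n : ℕ} (L : ℝ) (u : E n → ℝ) : Prop := ∀ x y, |u x - u y| ≤ L * ‖x - y‖

/-- u is semiconcave with constant SC -/
def SemiconcaveWith {n : ℕ} (SC : ℝ) (u : E n → ℝ) : Prop :=
  ∀ x y, ddelta u x y ≤ SC * ‖y‖ ^ 2

/-- the quantity (1/2) ∫ δ(u,x,y) |√M⁻¹ y|^{−(n+2s)} det (√M⁻¹) dy -/
def kernelInt {n : ℕ} (s : ℝ) (M : Matrix (Fin n) (Fin n) ℝ) (u : E n → ℝ) (x : E n) : ℝ :=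
  (1/2) * ∫ y : E n, ddelta u x y / ‖mApp (msqrt M)⁻¹ y‖ ^ ((n : ℝ) + 2*s) * ((msqrt M)⁻¹).det

/-- elementary symmetric polynomial σ_j in n variables -/
def esymmP (n j : ℕ) (x : Fin n → ℝ) : ℝ :=
  ∑ A ∈ Finset.univ.powersetCard j, ∏ i ∈ A, x i

/-- the cone Γ_k -/
def GammaK (n k : ℕ) : Set (Fin n → ℝ) := {x | ∀ j, 1 ≤ j → j ≤ k → 0 < esymmP n j x}

/-- σ_k of a matrix, as a polynomial of the entries (σ_k(T) = σ_k(λ(T)) for symmetric T) -/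
def sigmaMat (n k : ℕ) (T : Matrix (Fin n) (Fin n) ℝ) : ℝ :=
  (-1)^k * T.charpoly.coeff (n - k)

/-- the family 𝓜_k of matrices D(σ_k^{1/k})(T), T symmetric with λ(T) ∈ Γ_k -/
def MM (n k : ℕ) : Set (Matrix (Fin n) (Fin n) ℝ) :=
  {M | ∃ T : Matrix (Fin n) (Fin n) ℝ, T.IsSymm ∧ eigenv T ∈ GammaK n k ∧
    M = Matrix.of fun i j => (1/(k:ℝ)) * sigmaMat n k T ^ ((1 - (k:ℝ))/(k:ℝ)) *
      deriv (fun t : ℝ => sigmaMat n k (T + t • Matrix.single i j 1)) 0}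

/-- the fractional k-Hessian operator F_s[u](x) -/
def FsK {n : ℕ} (k : ℕ) (s : ℝ) (u : E n → ℝ) (x : E n) : ℝ :=
  sInf ((fun M => kernelInt s M u x) '' MM n k)

/-- the strictly elliptic fractional k-Hessian operator F_s^θ[u](x) -/
def FsKtheta {n : ℕ} (k : ℕ) (s θ : ℝ) (u : E n → ℝ) (x : E n) : ℝ :=
  sInf ((fun M => kernelInt s M u x) '' {M | M ∈ MM n k ∧ θ ≤ lamMin M})

/-- the Hessian matrix D²u(x) -/
def hess {n : ℕ} (u : E n → ℝ) (x : E n) : Matrix (Fin n) (Fin n) ℝ :=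
  Matrix.of fun i j =>
    fderiv ℝ (fun z => fderiv ℝ u z (EuclideanSpace.single j (1:ℝ))) x (EuclideanSpace.single i (1:ℝ))

/-- F(A) = f(λ(A)), extended to all matrices by symmetrization -/
def Fgen {n : ℕ} (f : (Fin n → ℝ) → ℝ) (A : Matrix (Fin n) (Fin n) ℝ) : ℝ :=
  f (eigenv ((1/2 : ℝ) • (A + Aᵀ)))

/-- DF(A) : the matrix of partial derivatives {∂F/∂A_{ij}(A)} -/
def DFgen {n : ℕ} (f : (Fin n → ℝ) → ℝ) (T : Matrix (Fin n) (Fin n) ℝ) :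
    Matrix (Fin n) (Fin n) ℝ :=
  Matrix.of fun i j => deriv (fun t : ℝ => Fgen f (T + t • Matrix.single i j 1)) 0

end


-- ===================== auxiliary lemmas =====================
section AuxStmt15
open Polynomial Matrix Finset

private lemma myCharpoly_conj {n : ℕ} (U B V : Matrix (Fin n) (Fin n) ℝ) (hUV : U * V = 1) :
    (U * B * V).charpoly = B.charpoly := by
  have hmap : charmatrix (U * B * V) = U.map C * charmatrix B * V.map C := by
    unfold charmatrix
    have h1 : U.map (C : ℝ →+* ℝ[X]) * ((scalar (Fin n)) X - C.mapMatrix B) * V.map C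
        = U.map C * (scalar (Fin n)) X * V.map C - U.map C * C.mapMatrix B * V.map C := by
      rw [Matrix.mul_sub, Matrix.sub_mul]
    rw [h1]
    congr 1
    · have hc : U.map (C : ℝ →+* ℝ[X]) * (scalar (Fin n)) X = (scalar (Fin n)) X * U.map C :=
        (Matrix.scalar_commute X (fun r => (Commute.all _ _)) (U.map C)).symm
      rw [hc, Matrix.mul_assoc, ← Matrix.map_mul, hUV]
      simp
    · simp only [RingHom.mapMatrix_apply]
      rw [← Matrix.map_mul, ← Matrix.map_mul]
  rw [Matrix.charpoly, hmap, Matrix.det_mul, Matrix.det_mul]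
  rw [mul_comm ((U.map C).det), mul_assoc, ← Matrix.det_mul, ← Matrix.map_mul, hUV]
  simp [Matrix.charpoly]

private lemma myCharmatrix_diag {n : ℕ} (d : Fin n → ℝ) :
    charmatrix (Matrix.diagonal d) = Matrix.diagonal (fun i => X - C (d i)) := by
  ext i j
  by_cases h : i = j
  · subst h; simp [charmatrix_apply_eq]
  · simp [charmatrix_apply_ne _ _ _ h, Matrix.diagonal_apply_ne _ h]

private lemma myCharpoly_diag {n : ℕ} (d : Fin n → ℝ) :
    (Matrix.diagonal d).charpoly = ∏ i, (X - C (d i)) := by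
  rw [Matrix.charpoly, myCharmatrix_diag, Matrix.det_diagonal]

private lemma myCharpoly_herm {n : ℕ} {A : Matrix (Fin n) (Fin n) ℝ} (hA : A.IsHermitian) :
    A.charpoly = ∏ i, (X - C (hA.eigenvalues i)) := by
  have hst := hA.spectral_theorem
  set U : Matrix (Fin n) (Fin n) ℝ := (hA.eigenvectorUnitary : Matrix (Fin n) (Fin n) ℝ) with hU
  have h1 : U * star U = 1 := hA.eigenvectorUnitary.2.2
  have key : A.charpoly = (Matrix.diagonal (RCLike.ofReal ∘ hA.eigenvalues)).charpoly := by
    conv_lhs => rw [hst]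
    exact myCharpoly_conj U _ (star U) h1
  rw [key, myCharpoly_diag]
  congr 1

private lemma mySigma_of_prod {n j : ℕ} (hj : j ≤ n) (A : Matrix (Fin n) (Fin n) ℝ)
    (v : Fin n → ℝ) (h : A.charpoly = ∏ i, (X - C (v i))) : sigmaMat n j A = esymmP n j v := by
  have hcard : (Multiset.map v Finset.univ.val).card = n := by simp
  have hle : n - j ≤ (Multiset.map v Finset.univ.val).card := by omega
  have hprod : A.charpoly = ((Multiset.map v Finset.univ.val).map fun t => X - C t).prod := by
    rw [h, Multiset.map_map]; rfl
  have hv := Multiset.prod_X_sub_C_coeff (Multiset.map v Finset.univ.val) hle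
  rw [← hprod, hcard] at hv
  have hnj : n - (n - j) = j := by omega
  rw [hnj] at hv
  rw [sigmaMat, hv, Finset.esymm_map_val]
  rw [← mul_assoc, ← mul_pow]
  simp [esymmP]

private lemma myDet_nearly_diag {n : ℕ} {R : Type*} [CommRing R] (N : Matrix (Fin n) (Fin n) R)
    (i j : Fin n) (hij : i ≠ j) (h : ∀ l m, l ≠ m → ¬(l = i ∧ m = j) → N l m = 0) :
    N.det = ∏ l, N l l := by
  rw [Matrix.det_apply]
  rw [Finset.sum_eq_single (1 : Equiv.Perm (Fin n))]
  · simp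
  · intro σ _ hσ
    have hzero : ∃ l, N (σ l) l = 0 := by
      obtain ⟨l₀, hl₀⟩ : ∃ l, σ l ≠ l := by
        by_contra hc
        push_neg at hc
        exact hσ (Equiv.ext fun x => hc x)
      by_cases hcase : σ l₀ = i ∧ l₀ = j
      · obtain ⟨h1, h2⟩ := hcase
        subst h2
        refine ⟨i, h _ _ ?_ ?_⟩
        · intro he
          exact hij (σ.injective (he.trans h1.symm))
        · rintro ⟨hsi, rfl⟩
          exact hij rfl
      · exact ⟨l₀, h _ _ hl₀ hcase⟩
    obtain ⟨l, hl⟩ := hzero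
    rw [show (∏ i : Fin n, N (σ i) i) = 0 from Finset.prod_eq_zero (Finset.mem_univ l) hl,
      smul_zero]
  · simp

private lemma myCharpoly_offdiag_perturb {n : ℕ} (d : Fin n → ℝ) (i j : Fin n) (hij : i ≠ j)
    (c : ℝ) :
    (Matrix.diagonal d + c • Matrix.single i j 1).charpoly = ∏ l, (X - C (d l)) := by
  set M := Matrix.diagonal d + c • Matrix.single i j 1 with hM
  have hdet : (charmatrix M).det = ∏ l, charmatrix M l l := by
    apply myDet_nearly_diag _ i j hij
    intro l m hlm hnot
    rw [charmatrix_apply_ne _ _ _ hlm]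
    have : M l m = 0 := by
      simp only [hM, Matrix.add_apply, Matrix.diagonal_apply_ne _ hlm, Matrix.smul_apply,
        Matrix.single, Matrix.of_apply, smul_eq_mul]
      rw [if_neg (by tauto)]
      ring
    rw [this, map_zero, neg_zero]
  rw [Matrix.charpoly, hdet]
  apply Finset.prod_congr rfl
  intro l _
  rw [charmatrix_apply_eq]
  have : M l l = d l := by
    simp only [hM, Matrix.add_apply, Matrix.diagonal_apply_eq, Matrix.smul_apply,
      Matrix.single, Matrix.of_apply, smul_eq_mul]
    rw [if_neg (by rintro ⟨rfl, rfl⟩; exact hij rfl)]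
    ring
  rw [this]

private lemma mySum_pc_support {n : ℕ} (s P : Finset (Fin n)) (hP : P ⊆ s) (m : ℕ)
    (f : Fin n → ℝ) (hf : ∀ l ∈ s, l ∉ P → f l = 0) :
    ∑ B ∈ s.powersetCard m, ∏ l ∈ B, f l = ∑ B ∈ P.powersetCard m, ∏ l ∈ B, f l := by
  rw [Finset.sum_subset (Finset.powersetCard_mono hP)]
  intro B hB hB'
  obtain ⟨hBs, hBc⟩ := Finset.mem_powersetCard.mp hB
  have : ¬ B ⊆ P := fun hsub => hB' (Finset.mem_powersetCard.mpr ⟨hsub, hBc⟩)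
  obtain ⟨l, hlB, hlP⟩ := Finset.not_subset.mp this
  exact Finset.prod_eq_zero hlB (hf l (hBs hlB) hlP)

private lemma mySum_pc_pred {n : ℕ} (P : Finset (Fin n)) (g : Finset (Fin n) → ℝ)
    (hc : 1 ≤ P.card) :
    ∑ B ∈ P.powersetCard (P.card - 1), g B = ∑ m ∈ P, g (P.erase m) := by
  refine (Finset.sum_bij (fun m hm => P.erase m) ?_ ?_ ?_ ?_).symm
  · intro m hm
    exact Finset.mem_powersetCard.mpr ⟨Finset.erase_subset _ _, by
      rw [Finset.card_erase_of_mem hm]⟩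
  · intro m hm m' hm' he
    by_contra hne
    have hmm : m' ∈ P.erase m := Finset.mem_erase.mpr ⟨fun h => hne h.symm, hm'⟩
    rw [he] at hmm
    exact ((Finset.mem_erase.mp hmm).1 rfl).elim
  · intro B hB
    obtain ⟨hBP, hBc⟩ := Finset.mem_powersetCard.mp hB
    have hcd : (P \ B).card = 1 := by
      rw [Finset.card_sdiff_of_subset hBP, hBc]; omega
    obtain ⟨m, hm⟩ := Finset.card_eq_one.mp hcd
    have hmP : m ∈ P := by
      have : m ∈ P \ B := hm ▸ Finset.mem_singleton_self m
      exact (Finset.mem_sdiff.mp this).1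
    refine ⟨m, hmP, ?_⟩
    show P.erase m = B
    rw [Finset.erase_eq, ← hm, Finset.sdiff_sdiff_eq_self hBP]
  · intro m hm; rfl

private lemma myEsymmP_update (n k : ℕ) (d : Fin n → ℝ) (i : Fin n) (x : ℝ) (hk : 1 ≤ k) :
    esymmP n k (Function.update d i x) =
      (∑ A ∈ (Finset.univ.powersetCard k).filter (fun A => i ∉ A), ∏ l ∈ A, d l)
      + x * ∑ B ∈ ((Finset.univ.erase i).powersetCard (k-1)), ∏ l ∈ B, d l := by
  rw [esymmP, ← Finset.sum_filter_add_sum_filter_not _ (fun A => i ∉ A)]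
  congr 1
  · apply Finset.sum_congr rfl
    intro A hA
    apply Finset.prod_congr rfl
    intro l hl
    exact Function.update_of_ne
      (fun h => (Finset.mem_filter.mp hA).2 (by rw [← h]; exact hl)) _ _
  · rw [Finset.mul_sum]
    refine Finset.sum_bij' (fun A hA => A.erase i) (fun B hB => insert i B) ?_ ?_ ?_ ?_ ?_
    · intro A hA
      simp only [Finset.mem_filter, Finset.mem_powersetCard, not_not] at hA
      obtain ⟨⟨hAu, hAc⟩, hiA⟩ := hA
      exact Finset.mem_powersetCard.mpr ⟨by
        intro l hl
        exact Finset.mem_erase.mpr ⟨(Finset.mem_erase.mp hl).1, Finset.mem_univ l⟩,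
        by rw [Finset.card_erase_of_mem hiA, hAc]⟩
    · intro B hB
      obtain ⟨hBu, hBc⟩ := Finset.mem_powersetCard.mp hB
      have hiB : i ∉ B := fun h => (Finset.mem_erase.mp (hBu h)).1 rfl
      refine Finset.mem_filter.mpr ⟨Finset.mem_powersetCard.mpr
        ⟨Finset.subset_univ _, ?_⟩, by simp⟩
      rw [Finset.card_insert_of_notMem hiB, hBc]; omega
    · intro A hA
      simp only [Finset.mem_filter, not_not] at hA
      exact Finset.insert_erase hA.2
    · intro B hB
      obtain ⟨hBu, hBc⟩ := Finset.mem_powersetCard.mp hB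
      exact Finset.erase_insert (fun h => (Finset.mem_erase.mp (hBu h)).1 rfl)
    · intro A hA
      simp only [Finset.mem_filter, not_not] at hA
      rw [← Finset.mul_prod_erase A _ hA.2, Function.update_self]
      congr 1
      apply Finset.prod_congr rfl
      intro l hl
      exact Function.update_of_ne (Finset.mem_erase.mp hl).1 _ _

private lemma myEsymmP_update_linear (n k : ℕ) (hk : 1 ≤ k) (d : Fin n → ℝ) (i : Fin n)
    (t : ℝ) :
    esymmP n k (Function.update d i (d i + t)) = esymmP n k d +
      t * ∑ B ∈ ((Finset.univ.erase i).powersetCard (k-1)), ∏ l ∈ B, d l := by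
  have h1 := myEsymmP_update n k d i (d i + t) hk
  have h0 := myEsymmP_update n k d i (d i) hk
  rw [Function.update_eq_self] at h0
  rw [h1, h0]; ring

def dvec (n k : ℕ) (a b : ℝ) : Fin n → ℝ := fun i =>
  if (i:ℕ) < n-k then 0 else if (i:ℕ) < n-1 then a else b

def bigT (n k : ℕ) : Finset (Fin n) := Finset.univ.filter (fun i => n - k ≤ (i:ℕ))

section Core
variable {n k : ℕ} (hn : 2 ≤ n) (hk2 : 2 ≤ k) (hkn : k ≤ n) {a b : ℝ} (ha : 0 < a) (hb : 0 < b)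

lemma mem_bigT {i : Fin n} : i ∈ bigT n k ↔ n - k ≤ (i:ℕ) := by
  simp [bigT]

include hn hk2 hkn

lemma card_bigT : (bigT n k).card = k := by
  have : bigT n k = Finset.Ici (⟨n-k, by omega⟩ : Fin n) := by
    ext i; simp [bigT, Finset.mem_Ici, Fin.le_def]
  rw [this, Fin.card_Ici]; simp; omega

omit hn hk2 hkn
include ha hb

lemma dvec_nonneg (i : Fin n) : 0 ≤ dvec n k a b i := by
  rw [dvec]
  split
  · exact le_refl 0
  · split
    exacts [ha.le, hb.le]

lemma dvec_pos_of_mem {i : Fin n} (h : i ∈ bigT n k) : 0 < dvec n k a b i := by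
  rw [mem_bigT] at h
  rw [dvec, if_neg (by omega)]
  split <;> assumption

omit ha hb
include hn hk2 hkn

lemma bigT_split : bigT n k
    = insert (⟨n-1, by omega⟩ : Fin n) (Finset.Ico ⟨n-k, by omega⟩ ⟨n-1, by omega⟩) := by
  ext i
  simp only [bigT, Finset.mem_filter, Finset.mem_univ, true_and, Finset.mem_insert,
    Finset.mem_Ico, Fin.le_def, Fin.lt_def, Fin.ext_iff]
  have := i.isLt
  omega

include ha hb in
lemma prod_bigT : ∏ l ∈ bigT n k, dvec n k a b l = a^(k-1) * b := by
  rw [bigT_split hn hk2 hkn, Finset.prod_insert (by simp [Finset.mem_Ico, Fin.lt_def])]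
  have h1 : dvec n k a b ⟨n-1, by omega⟩ = b := by
    rw [dvec]
    simp only [Fin.val_mk]
    rw [if_neg (by omega), if_neg (by omega)]
  have h2 : ∏ l ∈ Finset.Ico (⟨n-k, by omega⟩ : Fin n) ⟨n-1, by omega⟩, dvec n k a b l
      = a^(k-1) := by
    have hval : ∀ l ∈ Finset.Ico (⟨n-k, by omega⟩ : Fin n) ⟨n-1, by omega⟩,
        dvec n k a b l = a := by
      intro l hl
      simp only [Finset.mem_Ico, Fin.lt_def, Fin.le_def, Fin.val_mk] at hl
      rw [dvec, if_neg (by omega), if_pos (by omega)]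
    rw [Finset.prod_congr rfl hval, Finset.prod_const, Fin.card_Ico]
    congr 1
    simp
    omega
  rw [h1, h2, mul_comm]

include ha hb

lemma esymmP_dvec : esymmP n k (dvec n k a b) = a^(k-1) * b := by
  rw [esymmP, mySum_pc_support Finset.univ (bigT n k) (Finset.subset_univ _) k _
    (fun l _ hl => by rw [dvec, if_pos (by rw [mem_bigT] at hl; omega)])]
  have hself := Finset.powersetCard_self (bigT n k)
  rw [card_bigT hn hk2 hkn] at hself
  rw [hself, Finset.sum_singleton]
  exact prod_bigT hn hk2 hkn ha hb

lemma esymmP_dvec_pos (j : ℕ) (hj1 : 1 ≤ j) (hjk : j ≤ k) :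
    0 < esymmP n j (dvec n k a b) := by
  rw [esymmP]
  obtain ⟨A, hAsub, hAcard⟩ := Finset.exists_subset_card_eq
    (show j ≤ (bigT n k).card by rw [card_bigT hn hk2 hkn]; exact hjk)
  apply Finset.sum_pos'
  · intro B _
    exact Finset.prod_nonneg fun l _ => dvec_nonneg ha hb l
  · refine ⟨A, Finset.mem_powersetCard.mpr ⟨Finset.subset_univ _, hAcard⟩, ?_⟩
    exact Finset.prod_pos fun l hl => dvec_pos_of_mem ha hb (hAsub hl)

lemma prod_bigT_erase {i : Fin n} (hi : i ∈ bigT n k) :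
    ∏ l ∈ (bigT n k).erase i, dvec n k a b l = (a^(k-1) * b) / dvec n k a b i := by
  have h := Finset.mul_prod_erase (bigT n k) (dvec n k a b) hi
  have hne : dvec n k a b i ≠ 0 := (dvec_pos_of_mem ha hb hi).ne'
  field_simp
  rw [mul_comm, h, prod_bigT hn hk2 hkn ha hb]

lemma T_eval (i : Fin n) :
    ∑ B ∈ ((Finset.univ.erase i).powersetCard (k-1)), ∏ l ∈ B, dvec n k a b l
      = (if (i:ℕ) < n-k then a^(k-1) + (k-1) * (a^(k-1)*b/a)
         else (a^(k-1)*b) / dvec n k a b i) := by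
  by_cases hi : (i:ℕ) < n - k
  · rw [if_pos hi]
    have hiT : i ∉ bigT n k := by rw [mem_bigT]; omega
    have hsub : bigT n k ⊆ Finset.univ.erase i := fun l hl =>
      Finset.mem_erase.mpr ⟨fun he => hiT (he ▸ hl), Finset.mem_univ l⟩
    rw [mySum_pc_support _ (bigT n k) hsub _ _
      (fun l _ hl => by rw [dvec, if_pos (by rw [mem_bigT] at hl; omega)])]
    have hk1 : k - 1 = (bigT n k).card - 1 := by rw [card_bigT hn hk2 hkn]
    rw [hk1, mySum_pc_pred _ _ (by rw [card_bigT hn hk2 hkn]; omega)]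
    have heval : ∀ m ∈ bigT n k, ∏ l ∈ (bigT n k).erase m, dvec n k a b l
        = (a^(k-1)*b) / dvec n k a b m := fun m hm => prod_bigT_erase hn hk2 hkn ha hb hm
    rw [Finset.sum_congr rfl heval]
    rw [bigT_split hn hk2 hkn, Finset.sum_insert (by simp [Finset.mem_Ico, Fin.lt_def])]
    have h1 : dvec n k a b ⟨n-1, by omega⟩ = b := by
      rw [dvec]; simp only [Fin.val_mk]; rw [if_neg (by omega), if_neg (by omega)]
    have h2 : ∀ l ∈ Finset.Ico (⟨n-k, by omega⟩ : Fin n) ⟨n-1, by omega⟩,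
        (a^(k-1)*b) / dvec n k a b l = a^(k-1)*b/a := by
      intro l hl
      simp only [Finset.mem_Ico, Fin.lt_def, Fin.le_def, Fin.val_mk] at hl
      rw [dvec, if_neg (by omega), if_pos (by omega)]
    rw [h1, Finset.sum_congr rfl h2, Finset.sum_const, Fin.card_Ico]
    have hb' : b ≠ 0 := hb.ne'
    rw [← bigT_split hn hk2 hkn, card_bigT hn hk2 hkn]
    rw [show n - 1 - (n - k) = k - 1 from by omega, nsmul_eq_mul, mul_div_cancel_right₀ _ hb']
    push_cast [Nat.cast_sub (by omega : 1 ≤ k)]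
    ring
  · rw [if_neg hi]
    have hiT : i ∈ bigT n k := by rw [mem_bigT]; omega
    have hsub : (bigT n k).erase i ⊆ Finset.univ.erase i :=
      Finset.erase_subset_erase _ (Finset.subset_univ _)
    rw [mySum_pc_support _ ((bigT n k).erase i) hsub _ _ (fun l hl hlP => by
      rw [dvec, if_pos ?_]
      rw [Finset.mem_erase] at hl
      have : l ∉ bigT n k ∨ l = i := by
        by_contra hc
        push_neg at hc
        exact hlP (Finset.mem_erase.mpr ⟨hc.2, hc.1⟩)
      rcases this with h | h
      · rw [mem_bigT] at h; omega
      · exact absurd h hl.1)]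
    have hcd : ((bigT n k).erase i).card = k - 1 := by
      rw [Finset.card_erase_of_mem hiT, card_bigT hn hk2 hkn]
    have hself := Finset.powersetCard_self ((bigT n k).erase i)
    rw [hcd] at hself
    rw [hself, Finset.sum_singleton]
    exact prod_bigT_erase hn hk2 hkn ha hb hiT

end Core

lemma diag_add_std {n : ℕ} (d : Fin n → ℝ) (i : Fin n) (t : ℝ) :
    Matrix.diagonal d + t • Matrix.single i i 1
      = Matrix.diagonal (Function.update d i (d i + t)) := by
  ext l m
  simp only [Matrix.add_apply, Matrix.smul_apply, Matrix.single, Matrix.of_apply,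
    smul_eq_mul]
  by_cases h : l = m
  · subst h
    by_cases h2 : l = i
    · subst h2
      simp [Function.update_self]
    · rw [Matrix.diagonal_apply_eq, Matrix.diagonal_apply_eq, Function.update_of_ne h2,
        if_neg (by rintro ⟨h', -⟩; exact h2 h'.symm)]
      ring
  · rw [Matrix.diagonal_apply_ne _ h, Matrix.diagonal_apply_ne _ h,
      if_neg (by rintro ⟨h1, h2⟩; exact h (h1.symm.trans h2))]
    ring

lemma deriv_one_add_mul_rpow (c p : ℝ) : deriv (fun t : ℝ => (1 + t*c) ^ p) 0 = p * c := by
  have h1 : HasDerivAt (fun t : ℝ => 1 + t*c) c 0 := by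
    simpa using ((hasDerivAt_id (0:ℝ)).mul_const c).const_add 1
  have h2 : HasDerivAt (fun x : ℝ => x ^ p) (p * (1:ℝ)^(p-1)) (1 + 0*c) := by
    rw [show (1:ℝ) + 0*c = 1 by ring]
    exact Real.hasDerivAt_rpow_const (Or.inl one_ne_zero)
  have h3 := h2.comp 0 h1
  have h4 : deriv (fun t : ℝ => (1 + t*c) ^ p) 0 = p * (1:ℝ)^(p-1) * c := h3.deriv
  rw [h4, Real.one_rpow, mul_one]

lemma deriv_one_add_mul (c : ℝ) : deriv (fun t : ℝ => 1 + t*c) 0 = c := by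
  have h1 : HasDerivAt (fun t : ℝ => 1 + t*c) c 0 := by
    simpa using ((hasDerivAt_id (0:ℝ)).mul_const c).const_add 1
  exact h1.deriv

end AuxStmt15
-- ===================== end auxiliary lemmas =====================

theorem stmt_15 (n k : ℕ) (hn : 2 ≤ n) (hk2 : 2 ≤ k) (hkn : k ≤ n) (ε : ℝ) (hε : 0 < ε)
    (Bt Mt : Matrix (Fin n) (Fin n) ℝ)
    (hBt : Bt = Matrix.diagonal fun i : Fin n =>
      if (i:ℕ) < n-k then 0
      else if (i:ℕ) < n-1 then ((k:ℝ)*ε) ^ ((1:ℝ)/((k:ℝ)-1)) else 1/((k:ℝ)*ε))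
    (hMt : Mt = Matrix.diagonal fun i : Fin n =>
      if (i:ℕ) < n-k then ε + ((k:ℝ)-1) * (((k:ℝ)*ε) ^ (-(1:ℝ)/((k:ℝ)-1)) / k)
      else if (i:ℕ) < n-1 then ((k:ℝ)*ε) ^ (-(1:ℝ)/((k:ℝ)-1)) / k else ε) :
    (eigenv Bt ∈ GammaK n k ∧ sigmaMat n k Bt = 1 ∧
     (Matrix.of fun i j => deriv (fun t : ℝ =>
        sigmaMat n k (Bt + t • Matrix.single i j 1) ^ ((1:ℝ)/(k:ℝ))) 0) = Mt ∧
     Mt ∈ MM n k) ∧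
    (3 ≤ k → ∀ s : ℝ, 0 < s → s < 1 →
      Tendsto (fun δ : ℝ =>
          ((k:ℝ)-2) * (((k:ℝ)*δ) ^ (-(1:ℝ)/((k:ℝ)-1)) / k) ^ s + δ ^ s)
        (nhdsWithin 0 (Set.Ioi 0)) atTop) := by
  have hk0 : (0:ℝ) < (k:ℝ) := by
    have : 0 < k := by omega
    exact_mod_cast this
  have hkε : (0:ℝ) < (k:ℝ)*ε := by positivity
  have hk1 : ((k:ℝ) - 1) ≠ 0 := by
    have : (2:ℝ) ≤ (k:ℝ) := by exact_mod_cast hk2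
    linarith
  set a : ℝ := ((k:ℝ)*ε) ^ ((1:ℝ)/((k:ℝ)-1)) with ha_def
  set b : ℝ := 1/((k:ℝ)*ε) with hb_def
  have ha : 0 < a := Real.rpow_pos_of_pos hkε _
  have hb : 0 < b := by rw [hb_def]; positivity
  have haK : a^(k-1) = (k:ℝ)*ε := by
    rw [ha_def, ← Real.rpow_natCast (((k:ℝ)*ε) ^ ((1:ℝ)/((k:ℝ)-1))) (k-1),
      ← Real.rpow_mul hkε.le]
    rw [show (1:ℝ)/((k:ℝ)-1) * ((k-1 : ℕ):ℝ) = 1 from ?_, Real.rpow_one]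
    rw [Nat.cast_sub (by omega : 1 ≤ k), Nat.cast_one]
    field_simp
  have hab : a^(k-1) * b = 1 := by
    rw [haK, hb_def]
    field_simp
  have h1a : 1/a = ((k:ℝ)*ε) ^ (-(1:ℝ)/((k:ℝ)-1)) := by
    rw [neg_div, Real.rpow_neg hkε.le, ← ha_def, one_div]
  have h1b : 1/b = (k:ℝ)*ε := by
    rw [hb_def]
    field_simp
  have hd : Bt = Matrix.diagonal (dvec n k a b) := by rw [hBt]; rfl
  have hsig : ∀ j, j ≤ n → sigmaMat n j Bt = esymmP n j (dvec n k a b) := by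
    intro j hj
    exact mySigma_of_prod hj _ _ (by rw [hd]; exact myCharpoly_diag _)
  have hσk : sigmaMat n k Bt = 1 := by
    rw [hsig k hkn, esymmP_dvec hn hk2 hkn ha hb, hab]
  have hherm : Bt.IsHermitian := by rw [hd]; exact Matrix.isHermitian_diagonal _
  have heig : eigenv Bt = hherm.eigenvalues := by
    simp only [eigenv, dif_pos hherm]
  have hGamma : eigenv Bt ∈ GammaK n k := by
    intro j hj1 hjk
    have hsym := mySigma_of_prod (le_trans hjk hkn) Bt (eigenv Bt)
      (by rw [heig]; exact myCharpoly_herm hherm)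
    rw [← hsym, hsig j (le_trans hjk hkn)]
    exact esymmP_dvec_pos hn hk2 hkn ha hb j hj1 hjk
  -- the derivative sums
  set Ti : Fin n → ℝ := fun i =>
    ∑ B ∈ ((Finset.univ.erase i).powersetCard (k-1)), ∏ l ∈ B, dvec n k a b l with hTi_def
  have hlin : ∀ (i : Fin n) (t : ℝ),
      sigmaMat n k (Bt + t • Matrix.single i i 1) = 1 + t * Ti i := by
    intro i t
    rw [hd, diag_add_std]
    rw [mySigma_of_prod hkn _ _ (myCharpoly_diag _)]
    rw [myEsymmP_update_linear n k (by omega) _ i t, esymmP_dvec hn hk2 hkn ha hb, hab]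
  have hoff : ∀ (i j : Fin n), i ≠ j → ∀ t : ℝ,
      sigmaMat n k (Bt + t • Matrix.single i j 1) = 1 := by
    intro i j hij t
    rw [hd, mySigma_of_prod hkn _ _ (myCharpoly_offdiag_perturb _ i j hij t),
      esymmP_dvec hn hk2 hkn ha hb, hab]
  have hMtval : ∀ i : Fin n, (1/(k:ℝ)) * Ti i =
      (if (i:ℕ) < n-k then ε + ((k:ℝ)-1) * (((k:ℝ)*ε) ^ (-(1:ℝ)/((k:ℝ)-1)) / k)
       else if (i:ℕ) < n-1 then ((k:ℝ)*ε) ^ (-(1:ℝ)/((k:ℝ)-1)) / k else ε) := by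
    intro i
    rw [hTi_def]
    simp only []
    rw [T_eval hn hk2 hkn ha hb i]
    by_cases hi : (i:ℕ) < n - k
    · rw [if_pos hi, if_pos hi]
      rw [hab, haK, show (1:ℝ)/a = ((k:ℝ)*ε) ^ (-(1:ℝ)/((k:ℝ)-1)) from h1a]
      field_simp
    · rw [if_neg hi, if_neg hi]
      rw [hab]
      by_cases hi2 : (i:ℕ) < n - 1
      · rw [if_pos hi2]
        have : dvec n k a b i = a := by
          rw [dvec, if_neg hi, if_pos hi2]
        rw [this, show (1:ℝ)/a = ((k:ℝ)*ε) ^ (-(1:ℝ)/((k:ℝ)-1)) from h1a] at *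
        rw [← h1a]
        field_simp
      · rw [if_neg hi2]
        have : dvec n k a b i = b := by
          rw [dvec, if_neg hi, if_neg hi2]
        rw [this]
        rw [one_div b, ← one_div, h1b]
        field_simp
  have hMt' : Mt = Matrix.diagonal (fun i : Fin n => (1/(k:ℝ)) * Ti i) := by
    rw [hMt]
    apply congrArg Matrix.diagonal
    funext i
    exact (hMtval i).symm
  refine ⟨⟨hGamma, hσk, ?_, ?_⟩, ?_⟩
  · -- derivative matrix equals Mt
    ext i j
    rw [Matrix.of_apply, hMt']
    by_cases hij : i = j
    · subst hij
      rw [Matrix.diagonal_apply_eq]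
      have hfun : (fun t : ℝ =>
          sigmaMat n k (Bt + t • Matrix.single i i 1) ^ ((1:ℝ)/(k:ℝ)))
          = fun t : ℝ => (1 + t * Ti i) ^ ((1:ℝ)/(k:ℝ)) := by
        funext t
        rw [hlin i t]
      rw [hfun, deriv_one_add_mul_rpow]
    · rw [Matrix.diagonal_apply_ne _ hij]
      have hfun : (fun t : ℝ =>
          sigmaMat n k (Bt + t • Matrix.single i j 1) ^ ((1:ℝ)/(k:ℝ)))
          = fun _ : ℝ => (1:ℝ) := by
        funext t
        rw [hoff i j hij t, Real.one_rpow]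
      rw [hfun, deriv_const]
  · -- Mt ∈ MM n k
    refine ⟨Bt, by rw [hd]; exact Matrix.isSymm_diagonal _, hGamma, ?_⟩
    ext i j
    rw [Matrix.of_apply, hσk, Real.one_rpow, mul_one, hMt']
    by_cases hij : i = j
    · subst hij
      rw [Matrix.diagonal_apply_eq]
      have hfun : (fun t : ℝ => sigmaMat n k (Bt + t • Matrix.single i i 1))
          = fun t : ℝ => 1 + t * Ti i := by
        funext t
        exact hlin i t
      rw [hfun, deriv_one_add_mul]
    · rw [Matrix.diagonal_apply_ne _ hij]
      have hfun : (fun t : ℝ => sigmaMat n k (Bt + t • Matrix.single i j 1))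
          = fun _ : ℝ => (1:ℝ) := by
        funext t
        exact hoff i j hij t
      rw [hfun, deriv_const, mul_zero]
  · -- the limit
    intro hk3 s hs0 hs1
    have hk0' : (0:ℝ) < (k:ℝ) := hk0
    have hkm1 : (0:ℝ) < (k:ℝ) - 1 := by
      have : (2:ℝ) ≤ (k:ℝ) := by exact_mod_cast hk2
      linarith
    have hkm2 : (0:ℝ) < (k:ℝ) - 2 := by
      have : (3:ℝ) ≤ (k:ℝ) := by exact_mod_cast hk3
      linarith
    have h1 : Tendsto (fun δ : ℝ => (k:ℝ)*δ) (nhdsWithin 0 (Set.Ioi 0))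
        (nhdsWithin 0 (Set.Ioi 0)) := by
      apply tendsto_nhdsWithin_of_tendsto_nhds_of_eventually_within
      · have hcont : Continuous (fun δ : ℝ => (k:ℝ)*δ) := continuous_const.mul continuous_id
        have := hcont.tendsto (0:ℝ)
        simp only [mul_zero] at this
        exact this.mono_left nhdsWithin_le_nhds
      · filter_upwards [self_mem_nhdsWithin] with x hx
        exact Set.mem_Ioi.mpr (mul_pos hk0' hx)
    have h2 : Tendsto (fun δ : ℝ => ((k:ℝ)*δ)⁻¹) (nhdsWithin 0 (Set.Ioi 0)) atTop :=
      tendsto_inv_nhdsGT_zero.comp h1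
    have h3 : Tendsto (fun x : ℝ => x ^ ((1:ℝ)/((k:ℝ)-1))) atTop atTop :=
      tendsto_rpow_atTop (by positivity)
    have h4 : Tendsto (fun δ : ℝ => (((k:ℝ)*δ)⁻¹) ^ ((1:ℝ)/((k:ℝ)-1)) / (k:ℝ))
        (nhdsWithin 0 (Set.Ioi 0)) atTop :=
      (h3.comp h2).atTop_div_const hk0'
    have h5 : Tendsto (fun δ : ℝ => ((((k:ℝ)*δ)⁻¹) ^ ((1:ℝ)/((k:ℝ)-1)) / (k:ℝ)) ^ s)
        (nhdsWithin 0 (Set.Ioi 0)) atTop :=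
      (tendsto_rpow_atTop hs0).comp h4
    have h6 : Tendsto (fun δ : ℝ =>
        ((k:ℝ)-2) * (((((k:ℝ)*δ)⁻¹) ^ ((1:ℝ)/((k:ℝ)-1)) / (k:ℝ)) ^ s))
        (nhdsWithin 0 (Set.Ioi 0)) atTop :=
      h5.const_mul_atTop hkm2
    apply tendsto_atTop_mono' _ _ h6
    filter_upwards [self_mem_nhdsWithin] with δ hδ
    have hδ0 : (0:ℝ) < δ := hδ
    have hkδ : (0:ℝ) < (k:ℝ)*δ := mul_pos hk0' hδ0
    have heq : (((k:ℝ)*δ) ^ (-(1:ℝ)/((k:ℝ)-1)) / k)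
        = (((k:ℝ)*δ)⁻¹) ^ ((1:ℝ)/((k:ℝ)-1)) / (k:ℝ) := by
      rw [neg_div, Real.rpow_neg hkδ.le, ← Real.inv_rpow hkδ.le]
    rw [← heq]
    have : (0:ℝ) ≤ δ ^ s := Real.rpow_nonneg hδ0.le s
    linarith
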